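/- Let 1 ≤ p < ∞, let Y be a Banach space, let F : ℓ_p → Y be a quasi-linear map, and let (u_n) be a sequence of nonzero pairwise disjointly supported vectors in ℓ_p. If there is a constant K such that for all n and all scalars λ₁,…,λ_n one has ‖F(Σⱼλⱼuⱼ) − ΣⱼλⱼF(uⱼ)‖ ≤ K‖Σⱼλⱼuⱼ‖_p, then F is trivial on the closed linear span of (u_n); in particular, F is not singular. -/

import Mathlib

/-!
Subtracting a linear map that agrees with `F` on the vectors `u n`, the hypothesis says that `F`
is bounded, `‖F z‖ ≤ K ‖z‖`, on the linear span `D` of the `u n`. For `x` in the closure of `D`,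
quasi-linearity makes `z ↦ F (x - z)` a Cauchy function as `z → x` inside `D`; its limit
`linearPart F D x` is linear in `x` and lies within `(K + 2M) ‖x - z‖` of `F (x - z)` for every
`z ∈ D`, so taking `z = 0` shows that `F` is trivial on the closure. Nonzero disjointly supported
vectors are linearly independent, so this closure is infinite-dimensional.
-/

open Filter Topology
open scoped ENNReal

section Quasilinear

variable {𝕜 Z Y : Type*} [NormedField 𝕜]
  [NormedAddCommGroup Z] [NormedSpace 𝕜 Z] [NormedAddCommGroup Y] [NormedSpace 𝕜 Y]

def QuasilinearWith (M : ℝ) (F : Z → Y) : Prop :=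
  ∀ u v, ‖F (u + v) - F u - F v‖ ≤ M * (‖u‖ + ‖v‖)

def IsTrivialOn (F : Z → Y) (W : Submodule 𝕜 Z) : Prop :=
  ∃ (L : W →ₗ[𝕜] Y) (C : ℝ), ∀ x : W, ‖F x - L x‖ ≤ C * ‖(x : Z)‖

variable {F : Z → Y} {M : ℝ}

theorem QuasilinearWith.mono {M' : ℝ} (hF : QuasilinearWith M F) (h : M ≤ M') :
    QuasilinearWith M' F := fun u v =>
  (hF u v).trans (mul_le_mul_of_nonneg_right h (by positivity))

theorem QuasilinearWith.sub_linearMap (hF : QuasilinearWith M F) (L : Z →ₗ[𝕜] Y) :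
    QuasilinearWith M (F - ⇑L) := fun u v => by
  convert hF u v using 2
  simp only [Pi.sub_apply, map_add]
  abel

theorem IsTrivialOn.of_sub_linearMap {W : Submodule 𝕜 Z} (L : Z →ₗ[𝕜] Y)
    (h : IsTrivialOn (F - ⇑L) W) : IsTrivialOn F W := by
  obtain ⟨Λ, C, hΛ⟩ := h
  refine ⟨Λ + L ∘ₗ W.subtype, C, fun x => ?_⟩
  simpa [sub_sub, add_comm] using hΛ x

end Quasilinear

section LinearPart

variable {𝕜 Z Y : Type*} [NormedField 𝕜]
  [NormedAddCommGroup Z] [NormedSpace 𝕜 Z] [NormedAddCommGroup Y]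
  {F : Z → Y} {D : Submodule 𝕜 Z} {M K : ℝ}

theorem tendsto_norm_sub_nhdsWithin (x : Z) (s : Set Z) :
    Tendsto (fun z => ‖x - z‖) (𝓝[s] x) (𝓝 0) := by
  simpa only [norm_sub_rev x] using (tendsto_norm_sub_self x).mono_left nhdsWithin_le_nhds

noncomputable def linearPart (F : Z → Y) (D : Submodule 𝕜 Z) (x : Z) : Y :=
  limUnder (𝓝[D] x) fun z => F (x - z)

theorem QuasilinearWith.norm_apply_sub_sub_apply_sub_le (hF : QuasilinearWith M F)
    (hD : ∀ z ∈ D, ‖F z‖ ≤ K * ‖z‖) (hM : 0 ≤ M) (hK : 0 ≤ K) (x : Z) {z z' : Z}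
    (hz : z ∈ D) (hz' : z' ∈ D) :
    ‖F (x - z) - F (x - z')‖ ≤ (K + 2 * M) * (‖x - z‖ + ‖x - z'‖) := by
  have hq := hF (x - z') (z' - z)
  rw [sub_add_sub_cancel] at hq
  have hw := hD (z' - z) (D.sub_mem hz' hz)
  have htri : ‖z' - z‖ ≤ ‖x - z‖ + ‖x - z'‖ := by
    simpa only [norm_sub_rev z' x, add_comm] using norm_sub_le_norm_sub_add_norm_sub z' x z
  calc ‖F (x - z) - F (x - z')‖
      ≤ ‖F (x - z) - F (x - z') - F (z' - z)‖ + ‖F (z' - z)‖ := norm_le_norm_sub_add _ _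
    _ ≤ M * (‖x - z'‖ + ‖z' - z‖) + K * ‖z' - z‖ := add_le_add hq hw
    _ ≤ (K + 2 * M) * (‖x - z‖ + ‖x - z'‖) := by
      nlinarith [mul_nonneg hM (norm_nonneg (x - z)),
        mul_le_mul_of_nonneg_left htri (add_nonneg hM hK)]

theorem QuasilinearWith.tendsto_linearPart [CompleteSpace Y] (hF : QuasilinearWith M F)
    (hD : ∀ z ∈ D, ‖F z‖ ≤ K * ‖z‖) (hM : 0 ≤ M) (hK : 0 ≤ K) {x : Z}
    (hx : x ∈ closure (D : Set Z)) :
    Tendsto (fun z => F (x - z)) (𝓝[D] x) (𝓝 (linearPart F D x)) := by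
  have hl : (𝓝[D] x).NeBot := mem_closure_iff_nhdsWithin_neBot.1 hx
  have hcauchy : Cauchy (map (fun z => F (x - z)) (𝓝[D] x)) := by
    rw [cauchy_map_iff, Metric.uniformity_eq_comap_nhds_zero, tendsto_comap_iff]
    refine ⟨hl, squeeze_zero' (g := fun p => (K + 2 * M) * (‖x - p.1‖ + ‖x - p.2‖))
      (Eventually.of_forall fun _ => dist_nonneg) ?_ ?_⟩
    · filter_upwards [prod_mem_prod self_mem_nhdsWithin self_mem_nhdsWithin] with p hp
      rw [Function.comp_apply, dist_eq_norm]
      exact hF.norm_apply_sub_sub_apply_sub_le hD hM hK x hp.1 hp.2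
    · simpa using (((tendsto_norm_sub_nhdsWithin x _).comp tendsto_fst).add
        ((tendsto_norm_sub_nhdsWithin x _).comp tendsto_snd)).const_mul (K + 2 * M)
  obtain ⟨y, hy⟩ := CompleteSpace.complete hcauchy
  exact tendsto_nhds_limUnder ⟨y, hy⟩

theorem QuasilinearWith.norm_apply_sub_sub_linearPart_le [CompleteSpace Y]
    (hF : QuasilinearWith M F) (hD : ∀ z ∈ D, ‖F z‖ ≤ K * ‖z‖) (hM : 0 ≤ M) (hK : 0 ≤ K)
    {x z : Z} (hx : x ∈ closure (D : Set Z)) (hz : z ∈ D) :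
    ‖F (x - z) - linearPart F D x‖ ≤ (K + 2 * M) * ‖x - z‖ := by
  have hl : (𝓝[D] x).NeBot := mem_closure_iff_nhdsWithin_neBot.1 hx
  refine le_of_tendsto_of_tendsto ((hF.tendsto_linearPart hD hM hK hx).const_sub _).norm
    (by simpa using ((tendsto_norm_sub_nhdsWithin x _).const_add ‖x - z‖).const_mul (K + 2 * M))
    ?_
  filter_upwards [self_mem_nhdsWithin] with z' hz'
  exact hF.norm_apply_sub_sub_apply_sub_le hD hM hK x hz hz'

theorem QuasilinearWith.linearPart_add [CompleteSpace Y] (hF : QuasilinearWith M F)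
    (hD : ∀ z ∈ D, ‖F z‖ ≤ K * ‖z‖) (hM : 0 ≤ M) (hK : 0 ≤ K) {x y : Z}
    (hx : x ∈ closure (D : Set Z)) (hy : y ∈ closure (D : Set Z)) :
    linearPart F D (x + y) = linearPart F D x + linearPart F D y := by
  have hxy : x + y ∈ closure (D : Set Z) := D.topologicalClosure.add_mem hx hy
  set C := K + 2 * M
  have key : ∀ z ∈ D, ∀ z' ∈ D,
      ‖linearPart F D (x + y) - (linearPart F D x + linearPart F D y)‖
        ≤ (2 * C + M) * (‖x - z‖ + ‖y - z'‖) := by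
    intro z hz z' hz'
    have h₁ := hF.norm_apply_sub_sub_linearPart_le hD hM hK hxy (D.add_mem hz hz')
    have h₂ := hF.norm_apply_sub_sub_linearPart_le hD hM hK hx hz
    have h₃ := hF.norm_apply_sub_sub_linearPart_le hD hM hK hy hz'
    have h₄ := hF (x - z) (y - z')
    rw [add_sub_add_comm, ← norm_neg] at h₁
    have hsplit : linearPart F D (x + y) - (linearPart F D x + linearPart F D y)
        = -(F (x - z + (y - z')) - linearPart F D (x + y))
          + (F (x - z + (y - z')) - F (x - z) - F (y - z'))
          + (F (x - z) - linearPart F D x) + (F (y - z') - linearPart F D y) := by abel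
    have htri : ‖x - z + (y - z')‖ ≤ ‖x - z‖ + ‖y - z'‖ := norm_add_le _ _
    rw [hsplit]
    refine (norm_add₄_le ..).trans ?_
    nlinarith [mul_le_mul_of_nonneg_left htri (by positivity : 0 ≤ C), norm_nonneg (x - z),
      norm_nonneg (y - z')]
  have := (mem_closure_iff_nhdsWithin_neBot.1 hx).prod (mem_closure_iff_nhdsWithin_neBot.1 hy)
  have hlim : Tendsto (fun p : Z × Z => (2 * C + M) * (‖x - p.1‖ + ‖y - p.2‖))
      (𝓝[D] x ×ˢ 𝓝[D] y) (𝓝 0) := by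
    simpa using (((tendsto_norm_sub_nhdsWithin x _).comp tendsto_fst).add
      ((tendsto_norm_sub_nhdsWithin y _).comp tendsto_snd)).const_mul (2 * C + M)
  refine eq_of_sub_eq_zero (norm_le_zero_iff.1 (ge_of_tendsto hlim ?_))
  filter_upwards [prod_mem_prod self_mem_nhdsWithin self_mem_nhdsWithin] with p hp
  exact key _ hp.1 _ hp.2

theorem QuasilinearWith.linearPart_smul [NormedSpace 𝕜 Y] [CompleteSpace Y]
    (hhom : ∀ (c : 𝕜) x, F (c • x) = c • F x) (hF : QuasilinearWith M F)
    (hD : ∀ z ∈ D, ‖F z‖ ≤ K * ‖z‖) (hM : 0 ≤ M) (hK : 0 ≤ K) (c : 𝕜) {x : Z}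
    (hx : x ∈ closure (D : Set Z)) :
    linearPart F D (c • x) = c • linearPart F D x := by
  have hcx : c • x ∈ closure (D : Set Z) := D.topologicalClosure.smul_mem c hx
  set C := K + 2 * M
  have key : ∀ z ∈ D,
      ‖linearPart F D (c • x) - c • linearPart F D x‖ ≤ 2 * C * ‖c‖ * ‖x - z‖ := by
    intro z hz
    have h₁ := hF.norm_apply_sub_sub_linearPart_le hD hM hK hcx (D.smul_mem c hz)
    have h₂ := hF.norm_apply_sub_sub_linearPart_le hD hM hK hx hz
    rw [← smul_sub, hhom, norm_smul, norm_sub_rev] at h₁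
    have hsplit : linearPart F D (c • x) - c • linearPart F D x
        = (linearPart F D (c • x) - c • F (x - z)) + c • (F (x - z) - linearPart F D x) := by
      rw [smul_sub]; abel
    rw [hsplit]
    refine (norm_add_le _ _).trans ?_
    rw [norm_smul]
    nlinarith [mul_le_mul_of_nonneg_left h₂ (norm_nonneg c)]
  have := mem_closure_iff_nhdsWithin_neBot.1 hx
  have hlim : Tendsto (fun z => 2 * C * ‖c‖ * ‖x - z‖) (𝓝[D] x) (𝓝 0) := by
    simpa using (tendsto_norm_sub_nhdsWithin x _).const_mul (2 * C * ‖c‖)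
  refine eq_of_sub_eq_zero (norm_le_zero_iff.1 (ge_of_tendsto hlim ?_))
  filter_upwards [self_mem_nhdsWithin] with z hz
  exact key z hz

theorem QuasilinearWith.isTrivialOn_topologicalClosure [NormedSpace 𝕜 Y] [CompleteSpace Y]
    (hhom : ∀ (c : 𝕜) x, F (c • x) = c • F x) (hF : QuasilinearWith M F)
    (hD : ∀ z ∈ D, ‖F z‖ ≤ K * ‖z‖) : IsTrivialOn F D.topologicalClosure := by
  have hF' := hF.mono (le_max_left M 0)
  have hD' : ∀ z ∈ D, ‖F z‖ ≤ max K 0 * ‖z‖ := fun z hz =>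
    (hD z hz).trans (mul_le_mul_of_nonneg_right (le_max_left K 0) (norm_nonneg z))
  have hM := le_max_right M 0
  have hK := le_max_right K 0
  refine ⟨{ toFun := fun x => linearPart F D x
            map_add' := fun x y => hF'.linearPart_add hD' hM hK x.2 y.2
            map_smul' := fun c x => hF'.linearPart_smul hhom hD' hM hK c x.2 },
    max K 0 + 2 * max M 0, fun x => ?_⟩
  simpa using hF'.norm_apply_sub_sub_linearPart_le hD' hM hK x.2 D.zero_mem

theorem QuasilinearWith.isTrivialOn_topologicalClosure_of_norm_sub_le [NormedSpace 𝕜 Y]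
    [CompleteSpace Y] (hhom : ∀ (c : 𝕜) x, F (c • x) = c • F x) (hF : QuasilinearWith M F)
    (L : Z →ₗ[𝕜] Y) (hL : ∀ z ∈ D, ‖F z - L z‖ ≤ K * ‖z‖) :
    IsTrivialOn F D.topologicalClosure :=
  ((hF.sub_linearMap L).isTrivialOn_topologicalClosure
    (fun c x => by simp [hhom, smul_sub]) hL).of_sub_linearMap L

end LinearPart

theorem LinearIndependent.exists_linearMap_apply_eq {K V V' ι : Type*} [DivisionRing K]
    [AddCommGroup V] [Module K V] [AddCommGroup V'] [Module K V'] {v : ι → V}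
    (hv : LinearIndependent K v) (w : ι → V') : ∃ g : V →ₗ[K] V', ∀ i, g (v i) = w i := by
  obtain ⟨g, hg⟩ := LinearMap.exists_extend (Finsupp.linearCombination K w ∘ₗ hv.repr)
  refine ⟨g, fun i => ?_⟩
  have hvi : v i ∈ Submodule.span K (Set.range v) := Submodule.subset_span (Set.mem_range_self i)
  simpa [hv.repr_eq_single i ⟨v i, hvi⟩ rfl] using LinearMap.congr_fun hg ⟨v i, hvi⟩

theorem LinearIndependent.not_finiteDimensional_of_forall_mem {K V ι : Type*} [DivisionRing K]
    [AddCommGroup V] [Module K V] [Infinite ι] {v : ι → V} (hv : LinearIndependent K v)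
    {W : Submodule K V} (hW : ∀ i, v i ∈ W) : ¬FiniteDimensional K W := fun _ =>
  Module.Finite.not_linearIndependent_of_infinite (R := K) (fun i => (⟨v i, hW i⟩ : W))
    (LinearIndependent.of_comp W.subtype hv)

theorem Submodule.exists_fin_sum_eq_of_mem_span_range {R M : Type*} [Semiring R]
    [AddCommMonoid M] [Module R M] {u : ℕ → M} {z : M} (hz : z ∈ span R (Set.range u)) :
    ∃ (n : ℕ) (c : Fin n → R), ∑ j, c j • u j = z := by
  obtain ⟨c, rfl⟩ := Finsupp.mem_span_range_iff_exists_finsupp.1 hz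
  refine ⟨c.support.sup id + 1, fun j => c j, ?_⟩
  rw [Fin.sum_univ_eq_sum_range (fun j => c j • u j), Finsupp.sum]
  refine (Finset.sum_subset (fun j hj => ?_) (fun j _ hj => ?_)).symm
  · exact Finset.mem_range.2 (Nat.lt_succ_of_le (Finset.le_sup (f := id) hj))
  · simp [Finsupp.notMem_support_iff.1 hj]

theorem lp.linearIndependent_of_disjoint {𝕜 α ι : Type*} [NormedField 𝕜] {p : ℝ≥0∞}
    [Fact (1 ≤ p)] {u : ι → lp (fun _ : α => 𝕜) p} (hne : ∀ i, u i ≠ 0)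
    (hdisj : ∀ i j, i ≠ j → ∀ k, u i k = 0 ∨ u j k = 0) : LinearIndependent 𝕜 u := by
  rw [linearIndependent_iff']
  intro s c hc i hi
  obtain ⟨k, hk⟩ : ∃ k, u i k ≠ 0 := by
    by_contra! h
    exact hne i (lp.ext (funext h))
  have hck : ∑ j ∈ s, c j * u j k = c i * u i k := by
    refine Finset.sum_eq_single i (fun j _ hji => ?_) (fun h => absurd hi h)
    rcases hdisj j i hji k with h | h
    · simp [h]
    · exact absurd h hk
  have := congrArg (fun z : lp (fun _ : α => 𝕜) p => z k) hc
  simp only [lp.coeFn_sum, Finset.sum_apply, lp.coeFn_smul, Pi.smul_apply, smul_eq_mul,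
    hck, lp.coeFn_zero, Pi.zero_apply] at this
  exact (mul_eq_zero.1 this).resolve_right hk

theorem stmt16_general (p : ℝ≥0∞) [Fact (1 ≤ p)]
    {Y : Type*} [NormedAddCommGroup Y] [NormedSpace ℝ Y] [CompleteSpace Y]
    (F : lp (fun _ : ℕ => ℝ) p → Y)
    -- `F` is homogeneous
    (hhom : ∀ (c : ℝ) (x : lp (fun _ : ℕ => ℝ) p), F (c • x) = c • F x)
    -- `F` is quasi-linear
    (hql : ∃ M : ℝ, ∀ u v : lp (fun _ : ℕ => ℝ) p,
      ‖F (u + v) - F u - F v‖ ≤ M * (‖u‖ + ‖v‖))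
    (u : ℕ → lp (fun _ : ℕ => ℝ) p) (hne : ∀ n, u n ≠ 0)
    (hdisj : ∀ m n, m ≠ n → ∀ k, u m k = 0 ∨ u n k = 0)
    (K : ℝ)
    (hest : ∀ (n : ℕ) (lam : Fin n → ℝ),
      ‖F (∑ j, lam j • u j) - ∑ j, lam j • F (u j)‖ ≤ K * ‖∑ j, lam j • u j‖) :
    -- `F` is trivial on the closed linear span of `(u_n)` …
    (∃ (L : ((Submodule.span ℝ (Set.range u)).topologicalClosure) →ₗ[ℝ] Y) (C : ℝ),
      ∀ x : ((Submodule.span ℝ (Set.range u)).topologicalClosure),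
        ‖F ↑x - L x‖ ≤ C * ‖(x : lp (fun _ : ℕ => ℝ) p)‖) ∧
    -- … and in particular `F` is not singular
    (∃ M : Submodule ℝ (lp (fun _ : ℕ => ℝ) p),
      IsClosed (M : Set (lp (fun _ : ℕ => ℝ) p)) ∧ ¬ FiniteDimensional ℝ M ∧
      ∃ (L : M →ₗ[ℝ] Y) (C : ℝ),
        ∀ x : M, ‖F ↑x - L x‖ ≤ C * ‖(x : lp (fun _ : ℕ => ℝ) p)‖) := by
  obtain ⟨M, hM⟩ := hql
  set D := Submodule.span ℝ (Set.range u)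
  have hli : LinearIndependent ℝ u := lp.linearIndependent_of_disjoint hne hdisj
  obtain ⟨g, hg⟩ := hli.exists_linearMap_apply_eq (F ∘ u)
  have hgD : ∀ z ∈ D, ‖F z - g z‖ ≤ K * ‖z‖ := by
    intro z hz
    obtain ⟨n, c, rfl⟩ := Submodule.exists_fin_sum_eq_of_mem_span_range hz
    simpa [hg] using hest n c
  have htriv : IsTrivialOn F D.topologicalClosure :=
    QuasilinearWith.isTrivialOn_topologicalClosure_of_norm_sub_le hhom hM g hgD
  exact ⟨htriv, D.topologicalClosure, D.isClosed_topologicalClosure,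
    hli.not_finiteDimensional_of_forall_mem
      fun n => D.le_topologicalClosure (Submodule.subset_span (Set.mem_range_self n)),
    htriv⟩

/-- for `1 ≤ p < ∞`, a quasi-linear map `F : ℓ_p → Y` and a sequence
`(u_n)` of nonzero pairwise disjointly supported vectors in `ℓ_p`: if there is `K` with
`‖F(Σλⱼuⱼ) − ΣλⱼF(uⱼ)‖ ≤ K‖Σλⱼuⱼ‖_p` for all finite scalar families, then `F` is trivial
on the closed linear span of `(u_n)`; in particular `F` is not singular. -/
theorem stmt16 (p : ℝ≥0∞) [Fact (1 ≤ p)] (hptop : p ≠ ⊤)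
    {Y : Type*} [NormedAddCommGroup Y] [NormedSpace ℝ Y] [CompleteSpace Y]
    (F : lp (fun _ : ℕ => ℝ) p → Y)
    -- `F` is homogeneous
    (hhom : ∀ (c : ℝ) (x : lp (fun _ : ℕ => ℝ) p), F (c • x) = c • F x)
    -- `F` is quasi-linear
    (hql : ∃ M : ℝ, ∀ u v : lp (fun _ : ℕ => ℝ) p,
      ‖F (u + v) - F u - F v‖ ≤ M * (‖u‖ + ‖v‖))
    (u : ℕ → lp (fun _ : ℕ => ℝ) p) (hne : ∀ n, u n ≠ 0)
    (hdisj : ∀ m n, m ≠ n → ∀ k, u m k = 0 ∨ u n k = 0)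
    (K : ℝ)
    (hest : ∀ (n : ℕ) (lam : Fin n → ℝ),
      ‖F (∑ j, lam j • u j) - ∑ j, lam j • F (u j)‖ ≤ K * ‖∑ j, lam j • u j‖) :
    -- `F` is trivial on the closed linear span of `(u_n)` …
    (∃ (L : ((Submodule.span ℝ (Set.range u)).topologicalClosure) →ₗ[ℝ] Y) (C : ℝ),
      ∀ x : ((Submodule.span ℝ (Set.range u)).topologicalClosure),
        ‖F ↑x - L x‖ ≤ C * ‖(x : lp (fun _ : ℕ => ℝ) p)‖) ∧
    -- … and in particular `F` is not singular
    (∃ M : Submodule ℝ (lp (fun _ : ℕ => ℝ) p),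
      IsClosed (M : Set (lp (fun _ : ℕ => ℝ) p)) ∧ ¬ FiniteDimensional ℝ M ∧
      ∃ (L : M →ₗ[ℝ] Y) (C : ℝ),
        ∀ x : M, ‖F ↑x - L x‖ ≤ C * ‖(x : lp (fun _ : ℕ => ℝ) p)‖) :=
  stmt16_general p F hhom hql u hne hdisj K hest
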